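/- arXiv:2604.02693 — 2 statements merged into one kernel-verified Lean document; each statement's English description precedes it below -/
import Mathlib

section
/- For every θ ∈ ℝ, the infimum over all 2π-periodic functions φ ∈ C¹(ℝ,ℝ) of sup_{x∈ℝ} [ (1/2)·φ'(x)² + (cos x − 1)·(1 − arctan(θ)/(4π)) ] equals 0. In particular this inf–sup is independent of θ, so for the Hamiltonian H(x,p,u) = (1/2)p² + (cos x − 1)(1 − arctan(u)/(4π)) the admissible set 𝒞 = {H̄(0,θ) : θ ∈ ℝ} is the single point {0} and has empty interior, while I(0) = ℝ. -/
open Filter Set Real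

noncomputable section

/-- The inf–sup representation of the effective Hamiltonian `H̄(0,θ)` at `p = 0` for
`H(x,p,u) = p²/2 + (cos x − 1)(1 − arctan(u)/(4π))`, which is `2π`-periodic in `x`. -/
def F2 (θ : ℝ) : ℝ :=
  ⨅ φ : {φ : ℝ → ℝ // ContDiff ℝ 1 φ ∧ Function.Periodic φ (2 * π)},
    ⨆ x : ℝ, ((1/2) * (deriv φ.1 x) ^ 2 + (Real.cos x - 1) * (1 - Real.arctan θ / (4 * π)))

lemma c_pos (θ : ℝ) : 0 < 1 - Real.arctan θ / (4 * π) := by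
  have hπ : 0 < π := Real.pi_pos
  have h1 : Real.arctan θ < π / 2 := Real.arctan_lt_pi_div_two θ
  have h2 : Real.arctan θ / (4 * π) < 1 := by
    rw [div_lt_one (by positivity)]
    calc Real.arctan θ < π / 2 := h1
    _ ≤ 4 * π := by nlinarith
  linarith

lemma zero_phi_mem : ContDiff ℝ 1 (fun _ : ℝ => (0:ℝ)) ∧
    Function.Periodic (fun _ : ℝ => (0:ℝ)) (2 * π) :=
  ⟨contDiff_const, fun _ => rfl⟩

lemma supF_eq_zero (θ : ℝ) :
    (⨆ x : ℝ, ((1/2) * (deriv (fun _ : ℝ => (0:ℝ)) x) ^ 2 +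
      (Real.cos x - 1) * (1 - Real.arctan θ / (4 * π)))) = 0 := by
  have hc := (c_pos θ).le
  have hle : ∀ x : ℝ, (1/2) * (deriv (fun _ : ℝ => (0:ℝ)) x) ^ 2 +
      (Real.cos x - 1) * (1 - Real.arctan θ / (4 * π)) ≤ 0 := by
    intro x
    have : deriv (fun _ : ℝ => (0:ℝ)) x = 0 := deriv_const x 0
    rw [this]
    have hcos : Real.cos x - 1 ≤ 0 := by have := Real.cos_le_one x; linarith
    nlinarith
  refine le_antisymm (ciSup_le hle) ?_
  have h0 : (1/2) * (deriv (fun _ : ℝ => (0:ℝ)) 0) ^ 2 +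
      (Real.cos 0 - 1) * (1 - Real.arctan θ / (4 * π)) = 0 := by
    simp
  calc (0:ℝ) = _ := h0.symm
  _ ≤ _ := le_ciSup (f := fun x : ℝ => (1/2) * (deriv (fun _ : ℝ => (0:ℝ)) x) ^ 2 +
      (Real.cos x - 1) * (1 - Real.arctan θ / (4 * π)))
      ⟨0, by rintro y ⟨x, rfl⟩; exact hle x⟩ 0

lemma sup_nonneg (θ : ℝ)
    (φ : {φ : ℝ → ℝ // ContDiff ℝ 1 φ ∧ Function.Periodic φ (2 * π)}) :
    0 ≤ ⨆ x : ℝ, ((1/2) * (deriv φ.1 x) ^ 2 +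
      (Real.cos x - 1) * (1 - Real.arctan θ / (4 * π))) := by
  obtain ⟨f, hf, hper⟩ := φ
  set c := 1 - Real.arctan θ / (4 * π) with hcdef
  have hcont : Continuous (deriv f) := (hf.iterate_deriv' 0 1).continuous
  -- deriv f is periodic
  have hdper : Function.Periodic (deriv f) (2 * π) := by
    intro x
    have : (fun y => f (y + 2 * π)) = f := funext fun y => hper y
    calc deriv f (x + 2 * π) = deriv (fun y => f (y + 2 * π)) x := by
          rw [deriv_comp_add_const]
    _ = deriv f x := by rw [this]
  set g : ℝ → ℝ := fun x => (1/2) * (deriv f x) ^ 2 + (Real.cos x - 1) * c with hg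
  have hgper : Function.Periodic g (2 * π) := by
    intro x
    simp only [hg, hdper x, Real.cos_add_two_pi]
  have hgcont : Continuous g := by
    apply Continuous.add
    · exact (continuous_const.mul ((hcont.pow 2)))
    · exact ((Real.continuous_cos.sub continuous_const).mul continuous_const)
  have hbdd : BddAbove (Set.range g) :=
    (hgper.isBounded_of_continuous (by positivity) hgcont).bddAbove
  have h0 : 0 ≤ g 0 := by
    simp only [hg]
    have : Real.cos 0 - 1 = 0 := by simp
    rw [this, zero_mul, add_zero]
    positivity
  exact h0.trans (le_ciSup hbdd 0)

lemma F2_eq_zero (θ : ℝ) : F2 θ = 0 := by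
  unfold F2
  haveI : Nonempty {φ : ℝ → ℝ // ContDiff ℝ 1 φ ∧ Function.Periodic φ (2 * π)} :=
    ⟨⟨fun _ => 0, zero_phi_mem⟩⟩
  refine le_antisymm ?_ (le_ciInf (sup_nonneg θ))
  have hbb : BddBelow (Set.range
      (fun φ : {φ : ℝ → ℝ // ContDiff ℝ 1 φ ∧ Function.Periodic φ (2 * π)} =>
      ⨆ x : ℝ, ((1/2) * (deriv φ.1 x) ^ 2 + (Real.cos x - 1) * (1 - Real.arctan θ / (4 * π))))) :=
    ⟨0, by rintro y ⟨φ, rfl⟩; exact sup_nonneg θ φ⟩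
  exact (ciInf_le hbb ⟨fun _ => 0, zero_phi_mem⟩).trans_eq (supF_eq_zero θ)

/-- For every `θ`, the inf–sup equals `0`; hence the admissible set `𝒞` is the single point
`{0}` (so it has empty interior) and `I(0) = ℝ`. -/
theorem stmt_2 :
    (∀ θ : ℝ, F2 θ = 0) ∧ Set.range F2 = {0} ∧ {θ : ℝ | F2 θ = 0} = Set.univ := by
  refine ⟨F2_eq_zero, ?_, ?_⟩
  · ext y
    simp only [Set.mem_range, Set.mem_singleton_iff]
    constructor
    · rintro ⟨θ, rfl⟩; exact F2_eq_zero θ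
    · rintro rfl; exact ⟨0, F2_eq_zero 0⟩
  · ext θ; simp [F2_eq_zero θ]
end
end

section
/- Let u₀ : ℝ → ℝ be the 1-periodic function with u₀(x) = 4x/π for x ∈ [0,1/2] and u₀(x) = 4(1−x)/π for x ∈ [1/2,1]. Let s : ℝ → ℝ be the 1-periodic function equal to 1 on [0,1/2) and to −1 on [1/2,1). For each integer n ≥ 1 define uₙ(x) := ∫₀ˣ s(t) · 2|sin(2πnt)| dt. Then each uₙ is 1-periodic and continuously differentiable, satisfies (1/2)·uₙ'(x)² + (cos(4πnx) − 1) = 0 for every x ∈ ℝ, and uₙ converges to u₀ uniformly on ℝ as n → ∞. -/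
open Filter Set Real intervalIntegral MeasureTheory Topology

noncomputable section

private lemma per_eq_fract {f : ℝ → ℝ} (hf : Function.Periodic f 1) (x : ℝ) :
    f x = f (Int.fract x) := by
  have h := hf.sub_int_mul_eq (x := x) ⌊x⌋
  rw [mul_one] at h
  rw [Int.fract, h]

private lemma s_formula (s : ℝ → ℝ) (hsper : Function.Periodic s 1)
    (hsleft : ∀ x ∈ Set.Ico (0:ℝ) (1/2), s x = 1)
    (hsright : ∀ x ∈ Set.Ico (1/2:ℝ) 1, s x = -1) (t : ℝ) :
    s t = if Int.fract t < 1/2 then 1 else -1 := by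
  rw [per_eq_fract hsper t]
  rcases lt_or_ge (Int.fract t) (1/2) with h | h
  · rw [if_pos h]; exact hsleft _ ⟨Int.fract_nonneg t, h⟩
  · rw [if_neg (not_lt.2 h)]; exact hsright _ ⟨h, Int.fract_lt_one t⟩

private lemma II_of_bdd {f : ℝ → ℝ} (hm : Measurable f) {C : ℝ} (hC : ∀ t, |f t| ≤ C)
    (a b : ℝ) : IntervalIntegrable f volume a b := by
  rw [intervalIntegrable_iff]
  exact Measure.integrableOn_of_bounded measure_Ioc_lt_top.ne hm.aestronglyMeasurable
    (Eventually.of_forall fun t => by rw [Real.norm_eq_abs]; exact hC t)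

private lemma ae_ne_pt (c : ℝ) : ∀ᵐ t : ℝ, t ≠ c := by
  rw [MeasureTheory.ae_iff]
  simp only [not_not, Set.setOf_eq_eq_singleton]
  exact Real.volume_singleton

private lemma f_cont {s : ℝ → ℝ} (hs_eq : ∀ t, s t = if Int.fract t < 1/2 then 1 else -1)
    (n : ℕ) : Continuous fun t => s t * (2 * |Real.sin (2 * π * (n:ℝ) * t)|) := by
  have hg : Continuous fun t : ℝ => 2 * |Real.sin (2 * π * (n:ℝ) * t)| := by fun_prop
  have hs_abs : ∀ t, |s t| ≤ 1 := by intro t; rw [hs_eq t]; split <;> simp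
  rw [continuous_iff_continuousAt]
  intro x
  by_cases hx : Real.sin (2 * π * (n:ℝ) * x) = 0
  · have hfx : s x * (2 * |Real.sin (2 * π * (n:ℝ) * x)|) = 0 := by rw [hx]; simp
    unfold ContinuousAt
    rw [show ((fun t => s t * (2 * |Real.sin (2 * π * (n:ℝ) * t)|)) x) = 0 from hfx]
    have hb : Tendsto (fun t => 2 * |Real.sin (2 * π * (n:ℝ) * t)|) (𝓝 x) (𝓝 0) := by
      simpa [hx] using hg.tendsto x
    refine squeeze_zero_norm (fun t => ?_) hb
    rw [Real.norm_eq_abs, abs_mul,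
      abs_of_nonneg (show (0:ℝ) ≤ 2 * |Real.sin (2 * π * (n:ℝ) * t)| by positivity)]
    exact mul_le_of_le_one_left (by positivity) (hs_abs t)
  · have hne0 : Int.fract x ≠ 0 := by
      intro h
      apply hx
      have hxx : x = (⌊x⌋:ℝ) := by
        have h' : Int.fract x = x - ⌊x⌋ := rfl
        rw [h'] at h; linarith
      rw [hxx, show 2 * π * (n:ℝ) * (⌊x⌋:ℝ) = ((2*n*⌊x⌋ : ℤ):ℝ) * π by push_cast; ring]
      exact Real.sin_int_mul_pi _
    have hneh : Int.fract x ≠ 1/2 := by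
      intro h
      apply hx
      have hxx : x = (⌊x⌋:ℝ) + 1/2 := by
        have h' : Int.fract x = x - ⌊x⌋ := rfl
        rw [h'] at h; linarith
      rw [hxx, show 2 * π * (n:ℝ) * ((⌊x⌋:ℝ) + 1/2) = ((2*n*⌊x⌋ + n : ℤ):ℝ) * π by
        push_cast; ring]
      exact Real.sin_int_mul_pi _
    have hcf : ContinuousAt Int.fract x := continuousAt_fract (by
      intro h; apply hne0; rw [Int.fract, h]; simp)
    rcases lt_or_gt_of_ne hneh with hlt | hgt
    · have hev : ∀ᶠ t in 𝓝 x, s t = 1 := by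
        filter_upwards [hcf (Iio_mem_nhds hlt)] with t ht
        rw [hs_eq t, if_pos (show Int.fract t < 1/2 from ht)]
      exact hg.continuousAt.congr (hev.mono fun t ht => by simp [ht])
    · have hev : ∀ᶠ t in 𝓝 x, s t = -1 := by
        filter_upwards [hcf (Ioi_mem_nhds hgt)] with t ht
        rw [hs_eq t, if_neg (not_lt.2 (le_of_lt (show (1:ℝ)/2 < Int.fract t from ht)))]
      exact hg.neg.continuousAt.congr (hev.mono fun t ht => by simp [ht])

private lemma g_piece (n : ℕ) (hn : 1 ≤ n) (j : ℕ) :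
    ∫ t in ((j:ℝ)/(2*(n:ℝ)))..(((j:ℝ)+1)/(2*(n:ℝ))), 2 * |Real.sin (2*π*(n:ℝ)*t)|
      = 2/(π*(n:ℝ)) := by
  have hn0 : (0:ℝ) < n := by exact_mod_cast hn
  have hπ : 0 < π := pi_pos
  have hsq : ((-1:ℝ)^j) * ((-1:ℝ)^j) = 1 := by
    rw [← pow_add]; exact Even.neg_one_pow ⟨j, rfl⟩
  have hle : (j:ℝ)/(2*n) ≤ ((j:ℝ)+1)/(2*n) := by gcongr; linarith
  have habs : Set.EqOn (fun t => 2 * |Real.sin (2*π*(n:ℝ)*t)|)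
      (fun t => 2 * ((-1:ℝ)^j * Real.sin (2*π*(n:ℝ)*t)))
      (Set.uIcc ((j:ℝ)/(2*n)) (((j:ℝ)+1)/(2*n))) := by
    intro t ht
    rw [Set.uIcc_of_le hle] at ht
    have h1 : (j:ℝ)*π ≤ 2*π*n*t := by
      have h := ht.1
      rw [div_le_iff₀ (by positivity : (0:ℝ) < 2*n)] at h
      nlinarith
    have h2 : 2*π*n*t ≤ ((j:ℝ)+1)*π := by
      have h := ht.2
      rw [le_div_iff₀ (by positivity : (0:ℝ) < 2*n)] at h
      nlinarith
    have hkey : (-1:ℝ)^j * Real.sin (2*π*n*t) = Real.sin (2*π*n*t - (j:ℝ)*π) := by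
      have h := Real.sin_add_nat_mul_pi (2*π*(n:ℝ)*t - (j:ℝ)*π) j
      rw [sub_add_cancel] at h
      rw [h, ← mul_assoc, hsq, one_mul]
    have hnn : 0 ≤ (-1:ℝ)^j * Real.sin (2*π*(n:ℝ)*t) := by
      rw [hkey]
      exact Real.sin_nonneg_of_nonneg_of_le_pi (by linarith) (by linarith)
    show 2 * |Real.sin (2*π*(n:ℝ)*t)| = 2 * ((-1:ℝ)^j * Real.sin (2*π*(n:ℝ)*t))
    congr 1
    rw [← abs_of_nonneg hnn, abs_mul, abs_pow, abs_neg, abs_one, one_pow, one_mul]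
  rw [intervalIntegral.integral_congr habs]
  have hF : ∀ t ∈ Set.uIcc ((j:ℝ)/(2*n)) (((j:ℝ)+1)/(2*n)),
      HasDerivAt (fun y => -((-1:ℝ)^j) * Real.cos (2*π*(n:ℝ)*y) / (π*n))
        (2 * ((-1:ℝ)^j * Real.sin (2*π*(n:ℝ)*t))) t := by
    intro t _
    have hc : HasDerivAt (fun y : ℝ => Real.cos (2*π*(n:ℝ)*y))
        (-Real.sin (2*π*(n:ℝ)*t) * (2*π*(n:ℝ) * 1)) t :=
      (Real.hasDerivAt_cos (2*π*(n:ℝ)*t)).comp t ((hasDerivAt_id t).const_mul (2*π*(n:ℝ)))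
    have hd := (hc.const_mul (-((-1:ℝ)^j))).div_const (π*(n:ℝ))
    refine hd.congr_deriv ?_
    rw [div_eq_iff (by positivity)]
    ring
  rw [intervalIntegral.integral_eq_sub_of_hasDerivAt hF
    (Continuous.intervalIntegrable (by fun_prop) _ _)]
  have e1 : 2*π*(n:ℝ)*(((j:ℝ)+1)/(2*n)) = (j:ℝ)*π + π := by field_simp
  have e2 : 2*π*(n:ℝ)*((j:ℝ)/(2*n)) = (j:ℝ)*π := by field_simp
  have ecos : Real.cos ((j:ℝ)*π) = (-1:ℝ)^j := by
    have := Real.cos_add_nat_mul_pi 0 j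
    simpa using this
  rw [e1, e2, Real.cos_add_pi, ecos]
  field_simp
  nlinarith [hsq]

/-- The `1`-periodic tent profile `u₀` and the sign function `s`, together with
`uₙ(x) = ∫₀ˣ s(t)·2|sin(2πnt)| dt`: each `uₙ` is a `1`-periodic `C¹` exact solution of
`(1/2)uₙ'(x)² + (cos(4πnx) − 1) = 0`, and `uₙ → u₀` uniformly on `ℝ`. -/
theorem stmt_3 (u₀ s : ℝ → ℝ)
    (hu₀per : Function.Periodic u₀ 1)
    (hu₀left : ∀ x ∈ Set.Icc (0:ℝ) (1/2), u₀ x = 4 * x / π)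
    (hu₀right : ∀ x ∈ Set.Icc (1/2:ℝ) 1, u₀ x = 4 * (1 - x) / π)
    (hsper : Function.Periodic s 1)
    (hsleft : ∀ x ∈ Set.Ico (0:ℝ) (1/2), s x = 1)
    (hsright : ∀ x ∈ Set.Ico (1/2:ℝ) 1, s x = -1)
    (u : ℕ → ℝ → ℝ)
    (hu : ∀ (n : ℕ) (x : ℝ), u n x = ∫ t in (0:ℝ)..x, s t * (2 * |Real.sin (2 * π * n * t)|)) :
    (∀ n : ℕ, 1 ≤ n →
      Function.Periodic (u n) 1 ∧ ContDiff ℝ 1 (u n) ∧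
        ∀ x : ℝ, (1/2) * (deriv (u n) x) ^ 2 + (Real.cos (4 * π * n * x) - 1) = 0) ∧
    TendstoUniformly u u₀ atTop := by
  have hπ : (0:ℝ) < π := pi_pos
  have hs_eq : ∀ t, s t = if Int.fract t < 1/2 then 1 else -1 :=
    s_formula s hsper hsleft hsright
  have hs_abs : ∀ t, |s t| ≤ 1 := fun t => by rw [hs_eq t]; split <;> simp
  have hs_sq : ∀ t, s t ^ 2 = 1 := fun t => by rw [hs_eq t]; split <;> norm_num
  have hs_meas : Measurable s := by
    have h : s = fun t => if Int.fract t < 1/2 then (1:ℝ) else -1 := funext hs_eq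
    rw [h]
    exact Measurable.ite (measurableSet_lt (Measurable.fract measurable_id) measurable_const)
      measurable_const measurable_const
  have hs_int : ∀ a b : ℝ, IntervalIntegrable s volume a b :=
    fun a b => II_of_bdd hs_meas hs_abs a b
  -- integral representation of `u₀` on `[0,1]`
  have hu₀rep : ∀ x ∈ Set.Icc (0:ℝ) 1, u₀ x = (4/π) * ∫ t in (0:ℝ)..x, s t := by
    intro x hx
    rcases le_or_gt x (1/2) with hx2 | hx2
    · have h1 : ∫ t in (0:ℝ)..x, s t = ∫ t in (0:ℝ)..x, (1:ℝ) := by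
        apply intervalIntegral.integral_congr_ae
        filter_upwards [ae_ne_pt (1/2)] with t ht hmem
        rw [Set.uIoc_of_le hx.1] at hmem
        exact hsleft t ⟨le_of_lt hmem.1, lt_of_le_of_ne (le_trans hmem.2 hx2) ht⟩
      rw [h1, hu₀left x ⟨hx.1, hx2⟩]
      simp
      ring
    · have hx1 : (1:ℝ)/2 ≤ x := le_of_lt hx2
      have hsplit : ∫ t in (0:ℝ)..x, s t
          = (∫ t in (0:ℝ)..(1/2:ℝ), s t) + ∫ t in (1/2:ℝ)..x, s t :=
        (intervalIntegral.integral_add_adjacent_intervals (hs_int _ _) (hs_int _ _)).symm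
      have h1 : ∫ t in (0:ℝ)..(1/2:ℝ), s t = 1/2 := by
        have h : ∫ t in (0:ℝ)..(1/2:ℝ), s t = ∫ t in (0:ℝ)..(1/2:ℝ), (1:ℝ) := by
          apply intervalIntegral.integral_congr_ae
          filter_upwards [ae_ne_pt (1/2)] with t ht hmem
          rw [Set.uIoc_of_le (by norm_num : (0:ℝ) ≤ 1/2)] at hmem
          exact hsleft t ⟨le_of_lt hmem.1, lt_of_le_of_ne hmem.2 ht⟩
        rw [h]; simp
      have h2 : ∫ t in (1/2:ℝ)..x, s t = -(x - 1/2) := by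
        have h : ∫ t in (1/2:ℝ)..x, s t = ∫ t in (1/2:ℝ)..x, (-1:ℝ) := by
          apply intervalIntegral.integral_congr_ae
          filter_upwards [ae_ne_pt 1] with t ht hmem
          rw [Set.uIoc_of_le hx1] at hmem
          exact hsright t ⟨le_of_lt hmem.1, lt_of_le_of_ne (le_trans hmem.2 hx.2) ht⟩
        rw [h]; simp
      rw [hsplit, h1, h2, hu₀right x ⟨hx1, hx.2⟩]
      field_simp
      ring
  have key : ∀ n : ℕ, 1 ≤ n →
      (Function.Periodic (u n) 1 ∧ ContDiff ℝ 1 (u n) ∧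
        ∀ x : ℝ, (1/2) * (deriv (u n) x) ^ 2 + (Real.cos (4 * π * n * x) - 1) = 0) ∧
      ∀ x : ℝ, |u n x - u₀ x| ≤ 2 / n := by
    intro n hn
    have hn0 : (0:ℝ) < n := by exact_mod_cast hn
    have hfc : Continuous fun t => s t * (2 * |Real.sin (2 * π * (n:ℝ) * t)|) :=
      f_cont hs_eq n
    -- facts about h t = s t * (2|sin(2πnt)| - 4/π)
    have h4π : (4:ℝ)/π ≤ 2 := by
      rw [div_le_iff₀ hπ]; nlinarith [Real.pi_gt_three]
    have h4π0 : (0:ℝ) ≤ 4/π := by positivity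
    have hh_bound : ∀ t, |s t * (2 * |Real.sin (2 * π * (n:ℝ) * t)| - 4/π)| ≤ 4 := by
      intro t
      rw [abs_mul]
      have h1 : |2 * |Real.sin (2 * π * (n:ℝ) * t)| - 4/π| ≤ 4 := by
        have hsin : |Real.sin (2 * π * (n:ℝ) * t)| ≤ 1 := Real.abs_sin_le_one _
        have hsin0 : 0 ≤ |Real.sin (2 * π * (n:ℝ) * t)| := abs_nonneg _
        rw [abs_le]
        constructor <;> nlinarith
      calc |s t| * |2 * |Real.sin (2 * π * (n:ℝ) * t)| - 4/π|
          ≤ 1 * 4 := mul_le_mul (hs_abs t) h1 (abs_nonneg _) zero_le_one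
        _ = 4 := by norm_num
    have hh_meas : Measurable fun t => s t * (2 * |Real.sin (2 * π * (n:ℝ) * t)| - 4/π) :=
      hs_meas.mul (Continuous.measurable (by fun_prop))
    have hh_int : ∀ a b : ℝ,
        IntervalIntegrable (fun t => s t * (2 * |Real.sin (2 * π * (n:ℝ) * t)| - 4/π))
          volume a b := fun a b => II_of_bdd hh_meas hh_bound a b
    -- each piece integrates to zero
    have hpiece : ∀ j : ℕ, j < 2*n →
        ∫ t in ((j:ℝ)/(2*(n:ℝ)))..(((j:ℝ)+1)/(2*(n:ℝ))),
          s t * (2 * |Real.sin (2 * π * (n:ℝ) * t)| - 4/π) = 0 := by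
      intro j hj
      have hle : (j:ℝ)/(2*n) ≤ ((j:ℝ)+1)/(2*n) := by gcongr; linarith
      obtain ⟨ε, hε⟩ : ∃ ε : ℝ, ∀ t ∈ Set.Ico ((j:ℝ)/(2*(n:ℝ))) (((j:ℝ)+1)/(2*(n:ℝ))),
          s t = ε := by
        rcases lt_or_ge j n with hjn | hjn
        · refine ⟨1, fun t ht => hsleft t ⟨le_trans (by positivity) ht.1, ?_⟩⟩
          have h1 : ((j:ℝ)+1)/(2*n) ≤ (n:ℝ)/(2*n) := by
            gcongr
            have : (j:ℝ)+1 ≤ (n:ℝ) := by exact_mod_cast Nat.succ_le_of_lt hjn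
            linarith
          have h2 : (n:ℝ)/(2*n) = 1/2 := by field_simp
          calc t < ((j:ℝ)+1)/(2*n) := ht.2
            _ ≤ 1/2 := by rw [← h2] at *; exact h1
        · refine ⟨-1, fun t ht => hsright t ⟨?_, ?_⟩⟩
          · have h1 : (n:ℝ)/(2*n) ≤ (j:ℝ)/(2*n) := by
              gcongr <;> exact_mod_cast hjn
            have h2 : (n:ℝ)/(2*n) = 1/2 := by field_simp
            calc (1:ℝ)/2 = (n:ℝ)/(2*n) := h2.symm
              _ ≤ (j:ℝ)/(2*n) := h1
              _ ≤ t := ht.1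
          · have h1 : ((j:ℝ)+1)/(2*n) ≤ (2*(n:ℝ))/(2*n) := by
              gcongr
              have : (j:ℝ)+1 ≤ 2*(n:ℝ) := by exact_mod_cast Nat.succ_le_of_lt hj
              linarith
            have h2 : (2*(n:ℝ))/(2*n) = 1 := by field_simp
            calc t < ((j:ℝ)+1)/(2*n) := ht.2
              _ ≤ 1 := by rw [h2] at h1; exact h1
      have hcongr : ∫ t in ((j:ℝ)/(2*(n:ℝ)))..(((j:ℝ)+1)/(2*(n:ℝ))),
          s t * (2 * |Real.sin (2 * π * (n:ℝ) * t)| - 4/π)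
          = ∫ t in ((j:ℝ)/(2*(n:ℝ)))..(((j:ℝ)+1)/(2*(n:ℝ))),
            ε * (2 * |Real.sin (2 * π * (n:ℝ) * t)| - 4/π) := by
        apply intervalIntegral.integral_congr_ae
        filter_upwards [ae_ne_pt (((j:ℝ)+1)/(2*(n:ℝ)))] with t ht hmem
        rw [Set.uIoc_of_le hle] at hmem
        rw [hε t ⟨le_of_lt hmem.1, lt_of_le_of_ne hmem.2 ht⟩]
      rw [hcongr, intervalIntegral.integral_const_mul]
      have hzero : ∫ t in ((j:ℝ)/(2*(n:ℝ)))..(((j:ℝ)+1)/(2*(n:ℝ))),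
          (2 * |Real.sin (2 * π * (n:ℝ) * t)| - 4/π) = 0 := by
        rw [intervalIntegral.integral_sub (Continuous.intervalIntegrable (by fun_prop) _ _)
          intervalIntegrable_const]
        rw [g_piece n hn j, intervalIntegral.integral_const, smul_eq_mul]
        field_simp
        ring
      rw [hzero, mul_zero]
    -- partial sums are zero
    have hsum : ∀ k : ℕ, k ≤ 2*n →
        ∫ t in (0:ℝ)..((k:ℝ)/(2*(n:ℝ))),
          s t * (2 * |Real.sin (2 * π * (n:ℝ) * t)| - 4/π) = 0 := by
      intro k
      induction k with
      | zero => intro _; simp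
      | succ k ih =>
        intro hk
        have h1 := ih (le_of_lt (Nat.lt_of_succ_le hk))
        have hadd := intervalIntegral.integral_add_adjacent_intervals
          (hh_int 0 ((k:ℝ)/(2*(n:ℝ)))) (hh_int ((k:ℝ)/(2*(n:ℝ))) (((k:ℝ)+1)/(2*(n:ℝ))))
        rw [show (((k+1:ℕ)):ℝ) = (k:ℝ)+1 by push_cast; ring, ← hadd, h1,
          hpiece k (Nat.lt_of_succ_le hk), add_zero]
    -- bound for x ∈ [0,1]
    have hbound : ∀ x ∈ Set.Icc (0:ℝ) 1,
        |∫ t in (0:ℝ)..x, s t * (2 * |Real.sin (2 * π * (n:ℝ) * t)| - 4/π)| ≤ 2/n := by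
      intro x hx
      set k := ⌊2*(n:ℝ)*x⌋₊ with hkdef
      have hk1 : (k:ℝ) ≤ 2*(n:ℝ)*x := Nat.floor_le (by nlinarith [hx.1])
      have hk2 : 2*(n:ℝ)*x < (k:ℝ)+1 := Nat.lt_floor_add_one _
      have hkn : k ≤ 2*n := by
        have h : (k:ℝ) ≤ 2*(n:ℝ) := le_trans hk1 (by nlinarith [hx.2])
        exact_mod_cast h
      have hax : (k:ℝ)/(2*(n:ℝ)) ≤ x := by
        rw [div_le_iff₀ (by positivity)]; linarith
      have hsplit := intervalIntegral.integral_add_adjacent_intervals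
        (hh_int 0 ((k:ℝ)/(2*(n:ℝ)))) (hh_int ((k:ℝ)/(2*(n:ℝ))) x)
      rw [← hsplit, hsum k hkn, zero_add]
      have hb := intervalIntegral.norm_integral_le_of_norm_le_const
        (a := (k:ℝ)/(2*(n:ℝ))) (b := x) (C := 4)
        (f := fun t => s t * (2 * |Real.sin (2 * π * (n:ℝ) * t)| - 4/π))
        (fun t _ => by rw [Real.norm_eq_abs]; exact hh_bound t)
      rw [Real.norm_eq_abs] at hb
      have hxlt : x - (k:ℝ)/(2*(n:ℝ)) ≤ 1/(2*(n:ℝ)) := by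
        have h2 : x ≤ ((k:ℝ)+1)/(2*(n:ℝ)) := by
          rw [le_div_iff₀ (by positivity : (0:ℝ) < 2*(n:ℝ))]; linarith
        have h3 : ((k:ℝ)+1)/(2*(n:ℝ)) = (k:ℝ)/(2*(n:ℝ)) + 1/(2*(n:ℝ)) := by ring
        linarith
      calc |∫ t in ((k:ℝ)/(2*(n:ℝ)))..x,
            s t * (2 * |Real.sin (2 * π * (n:ℝ) * t)| - 4/π)|
          ≤ 4 * |x - (k:ℝ)/(2*(n:ℝ))| := hb
        _ = 4 * (x - (k:ℝ)/(2*(n:ℝ))) := by rw [abs_of_nonneg (by linarith)]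
        _ ≤ 4 * (1/(2*(n:ℝ))) := by linarith
        _ = 2/n := by field_simp; ring
    -- difference representation on [0,1]
    have hdiff : ∀ x ∈ Set.Icc (0:ℝ) 1, u n x - u₀ x
        = ∫ t in (0:ℝ)..x, s t * (2 * |Real.sin (2 * π * (n:ℝ) * t)| - 4/π) := by
      intro x hx
      have hsub : ∫ t in (0:ℝ)..x, s t * (2 * |Real.sin (2 * π * (n:ℝ) * t)| - 4/π)
          = (∫ t in (0:ℝ)..x, s t * (2 * |Real.sin (2 * π * (n:ℝ) * t)|))
            - ∫ t in (0:ℝ)..x, (4/π) * s t := by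
        rw [← intervalIntegral.integral_sub (hfc.intervalIntegrable _ _)
          ((hs_int 0 x).const_mul (4/π))]
        apply intervalIntegral.integral_congr
        intro t _
        ring
      rw [hsub, ← hu n x, intervalIntegral.integral_const_mul, ← hu₀rep x hx]
    -- periodicity of u n
    have hu1 : u n 1 = 0 := by
      have h1 : u₀ 1 = 0 := by
        have := hu₀per 0
        rw [zero_add] at this
        rw [this, hu₀left 0 ⟨le_refl _, by norm_num⟩]
        simp
      have h2 := hdiff 1 ⟨zero_le_one, le_refl _⟩
      have h3 : ((2*n:ℕ):ℝ)/(2*(n:ℝ)) = 1 := by push_cast; field_simp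
      have h4 := hsum (2*n) (le_refl _)
      rw [h3] at h4
      rw [h4] at h2
      linarith [h2, h1]
    have hint1 : ∫ t in (0:ℝ)..1, s t * (2 * |Real.sin (2 * π * (n:ℝ) * t)|) = 0 := by
      rw [← hu n 1]; exact hu1
    have hfper : Function.Periodic
        (fun t => s t * (2 * |Real.sin (2 * π * (n:ℝ) * t)|)) 1 := by
      intro t
      simp only
      rw [hsper t, show 2*π*(n:ℝ)*(t+1) = 2*π*(n:ℝ)*t + (n:ℕ)*(2*π) by push_cast; ring,
        Real.sin_add_nat_mul_two_pi]
    have hper : Function.Periodic (u n) 1 := by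
      intro x
      rw [hu n (x+1), hu n x,
        ← intervalIntegral.integral_add_adjacent_intervals
          (hfc.intervalIntegrable 0 x) (hfc.intervalIntegrable x (x+1)),
        hfper.intervalIntegral_add_eq x 0, zero_add, hint1, add_zero]
    -- derivative
    have hu_deriv : ∀ x : ℝ, HasDerivAt (u n)
        (s x * (2 * |Real.sin (2 * π * (n:ℝ) * x)|)) x := by
      intro x
      have hrw : u n = fun y => ∫ t in (0:ℝ)..y, s t * (2 * |Real.sin (2 * π * (n:ℝ) * t)|) :=
        funext (hu n)
      rw [hrw]
      exact intervalIntegral.integral_hasDerivAt_right (hfc.intervalIntegrable _ _)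
        (hfc.stronglyMeasurableAtFilter _ _) hfc.continuousAt
    have hderiv_eq : deriv (u n) = fun x => s x * (2 * |Real.sin (2 * π * (n:ℝ) * x)|) :=
      funext fun x => (hu_deriv x).deriv
    have hcd : ContDiff ℝ 1 (u n) := by
      rw [contDiff_one_iff_deriv]
      exact ⟨fun x => (hu_deriv x).differentiableAt, by rw [hderiv_eq]; exact hfc⟩
    have heik : ∀ x : ℝ, (1/2) * (deriv (u n) x) ^ 2 + (Real.cos (4 * π * n * x) - 1) = 0 := by
      intro x
      have hdx : deriv (u n) x = s x * (2 * |Real.sin (2 * π * (n:ℝ) * x)|) :=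
        (hu_deriv x).deriv
      rw [hdx]
      have h1 : (s x * (2 * |Real.sin (2 * π * (n:ℝ) * x)|))^2
          = 4 * Real.sin (2 * π * (n:ℝ) * x)^2 := by
        rw [mul_pow, hs_sq x, one_mul, mul_pow, sq_abs]
        ring
      rw [h1, show 4*π*(n:ℝ)*x = 2*(2*π*(n:ℝ)*x) by ring, Real.cos_two_mul]
      nlinarith [Real.sin_sq_add_cos_sq (2*π*(n:ℝ)*x)]
    refine ⟨⟨hper, hcd, heik⟩, ?_⟩
    intro x
    have hw : u n x - u₀ x = u n (Int.fract x) - u₀ (Int.fract x) := by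
      rw [per_eq_fract hper x, per_eq_fract hu₀per x]
    have hmem : Int.fract x ∈ Set.Icc (0:ℝ) 1 :=
      ⟨Int.fract_nonneg x, (Int.fract_lt_one x).le⟩
    rw [hw, hdiff _ hmem]
    exact hbound _ hmem
  refine ⟨fun n hn => (key n hn).1, ?_⟩
  rw [Metric.tendstoUniformly_iff]
  intro ε hε
  obtain ⟨N, hN⟩ := exists_nat_gt (2/ε)
  filter_upwards [eventually_ge_atTop (max N 1)] with n hn
  intro x
  have hn1 : 1 ≤ n := le_trans (le_max_right _ _) hn
  have hnN : N ≤ n := le_trans (le_max_left _ _) hn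
  have hb := (key n hn1).2 x
  have hn0 : (0:ℝ) < n := by exact_mod_cast hn1
  have hNn : (N:ℝ) ≤ n := by exact_mod_cast hnN
  have h2N : 2 < ε * N := by
    rw [div_lt_iff₀ hε] at hN
    linarith [hN]
  have h2n : 2/(n:ℝ) < ε := by
    rw [div_lt_iff₀ hn0]
    nlinarith
  rw [Real.dist_eq, abs_sub_comm]
  exact lt_of_le_of_lt hb h2n
end
end
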